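/- Let H, K be closed subspaces of L² and a ∈ 𝒢L∞ with aK = H. Then the operators T_a^{K,H} = M_a|_K and T_{ā⁻¹}^{K,H} from K to H are bounded and invertible, with (T_a^{K,H})⁻¹ = T_{a⁻¹}^{H,K} and (T_{ā⁻¹}^{K,H})⁻¹ = T_{ā}^{H,K}; moreover T_{ā⁻¹}^{K,H} = ((T_a^{K,H})*)⁻¹. -/

import Mathlib

open MeasureTheory

noncomputable section

/-! ## Setup: the circle, L², L∞, multiplication operators, Hardy space,
model spaces, and generalized Toeplitz operators -/

instance : Fact (0 < 2 * Real.pi) := ⟨by positivity⟩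

/-- The normalized Lebesgue (Haar) measure `dθ/2π` on the circle. -/
abbrev μH : Measure (AddCircle (2 * Real.pi)) := AddCircle.haarAddCircle

/-- The Lebesgue space `L²` of the circle. -/
abbrev L2 : Type := Lp ℂ 2 μH

/-- The space `L∞` of essentially bounded functions on the circle. -/
abbrev Linf : Type := Lp ℂ ⊤ μH

/-- Pointwise (a.e.) multiplication on `L∞`. -/
instance : Mul Linf :=
  ⟨fun f g => ((Lp.memLp g).smul (Lp.memLp f) (r := ⊤)).toLp (⇑f • ⇑g)⟩

/-- The constant function `1` as an element of `L∞`. -/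
instance : One Linf := ⟨(memLp_const (1 : ℂ)).toLp (fun _ => (1 : ℂ))⟩

/-- Complex conjugation on `L∞`. -/
instance : Star Linf :=
  ⟨fun f => ((Complex.conjCLE.toContinuousLinearMap).comp_memLp' (Lp.memLp f)).toLp
    ((starRingEnd ℂ) ∘ ⇑f)⟩

/-- Multiplication of an `L²` function by an `L∞` function. -/
def mulFun (φ : Linf) (f : L2) : L2 :=
  ((Lp.memLp f).smul (Lp.memLp φ) (r := 2)).toLp (⇑φ • ⇑f)

lemma mulFun_coe (φ : Linf) (f : L2) : mulFun φ f =ᵐ[μH] ⇑φ • ⇑f :=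
  MemLp.coeFn_toLp _

lemma mulFun_norm_le (φ : Linf) (f : L2) : ‖mulFun φ f‖ ≤ ‖φ‖ * ‖f‖ := by
  rw [mulFun, Lp.norm_toLp, Lp.norm_def, Lp.norm_def, ← ENNReal.toReal_mul]
  refine ENNReal.toReal_mono ?_ ?_
  · exact ENNReal.mul_ne_top (Lp.eLpNorm_ne_top φ) (Lp.eLpNorm_ne_top f)
  · exact eLpNorm_smul_le_eLpNorm_top_mul_eLpNorm 2 (Lp.aestronglyMeasurable f) ⇑φ

/-- The bounded multiplication operator `M_φ : L² → L²` for `φ ∈ L∞`. -/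
def mulCLM (φ : Linf) : L2 →L[ℂ] L2 :=
  LinearMap.mkContinuous
    { toFun := mulFun φ
      map_add' := by
        intro f g
        apply Lp.ext
        filter_upwards [mulFun_coe φ (f + g), mulFun_coe φ f, mulFun_coe φ g,
          Lp.coeFn_add f g, Lp.coeFn_add (mulFun φ f) (mulFun φ g)] with x h1 h2 h3 h4 h5
        simp only [Pi.smul_apply', Pi.add_apply] at *
        rw [h1, h5, h2, h3, h4]
        exact smul_add _ _ _
      map_smul' := by
        intro c f
        apply Lp.ext
        filter_upwards [mulFun_coe φ (c • f), mulFun_coe φ f,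
          Lp.coeFn_smul c f, Lp.coeFn_smul c (mulFun φ f)] with x h1 h2 h3 h4
        simp only [Pi.smul_apply', Pi.smul_apply, RingHom.id_apply] at *
        rw [h1, h4, h2, h3]
        exact smul_comm _ _ _ }
    ‖φ‖ (mulFun_norm_le φ)

/-- The image `a·K = {a f : f ∈ K}` of a subspace `K ⊆ L²` under multiplication by `a ∈ L∞`. -/
def smulSub (a : Linf) (K : Submodule ℂ L2) : Submodule ℂ L2 :=
  K.map (mulCLM a : L2 →ₗ[ℂ] L2)

/-- The Hardy space `H² = {f ∈ L² : f̂(n) = 0 for n < 0}`. -/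
def Hardy : Submodule ℂ L2 where
  carrier := {f | ∀ n : ℤ, n < 0 → fourierBasis.repr f n = 0}
  add_mem' := by
    intro f g hf hg n hn
    rw [map_add, lp.coeFn_add, Pi.add_apply, hf n hn, hg n hn, add_zero]
  zero_mem' := by
    intro n hn
    rw [map_zero, lp.coeFn_zero]
    rfl
  smul_mem' := by
    intro c f hf n hn
    rw [_root_.map_smul, lp.coeFn_smul, Pi.smul_apply, hf n hn, smul_zero]

lemma hardy_isClosed : IsClosed (Hardy : Set L2) := by
  have h : (Hardy : Set L2) =
      ⋂ n : {m : ℤ // m < 0}, {f : L2 | fourierBasis.repr f n.1 = 0} := by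
    ext f
    constructor
    · intro hf
      exact Set.mem_iInter.2 fun n => hf n.1 n.2
    · intro hf n hn
      exact Set.mem_iInter.1 hf ⟨n, hn⟩
  rw [h]
  refine isClosed_iInter fun n => isClosed_eq ?_ continuous_const
  have : (fun f : L2 => fourierBasis.repr f n.1) =
      fun f : L2 => (innerSL ℂ (fourierBasis n.1)) f := by
    funext f
    exact fourierBasis.repr_apply_apply f n.1
  rw [this]
  exact (innerSL ℂ (fourierBasis n.1)).continuous

instance : CompleteSpace Hardy := hardy_isClosed.completeSpace_coe

/-- The model space `K_θ = H² ⊖ θH² = H² ∩ (θH²)^⊥`. -/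
def modelSpace (θ : Linf) : Submodule ℂ L2 :=
  Hardy ⊓ (smulSub θ Hardy)ᗮ

instance (θ : Linf) : CompleteSpace (modelSpace θ) := by
  refine IsComplete.completeSpace_coe (IsClosed.isComplete ?_)
  have h : (modelSpace θ : Set L2) = (Hardy : Set L2) ∩ ((smulSub θ Hardy)ᗮ : Set L2) := rfl
  rw [h]
  exact hardy_isClosed.inter (smulSub θ Hardy).isClosed_orthogonal

/-- The generalized Toeplitz operator `T_φ^{H₁,H₂} = P_{H₂} M_φ |_{H₁}`. -/
def genToeplitz (φ : Linf) (H₁ H₂ : Submodule ℂ L2) [CompleteSpace H₂] : H₁ →L[ℂ] H₂ :=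
  H₂.orthogonalProjectionOnto.comp ((mulCLM φ).comp H₁.subtypeL)

/-- The orthogonal projection of `L²` onto `H`, viewed as an operator `L² → L²`. -/
def projL (H : Submodule ℂ L2) [CompleteSpace H] : L2 →L[ℂ] L2 :=
  H.subtypeL.comp H.orthogonalProjectionOnto

/-- `φ ∈ H∞`: all negative Fourier coefficients of `φ` vanish. -/
def IsHardyInf (φ : Linf) : Prop := ∀ n : ℤ, n < 0 → fourierCoeff (⇑φ) n = 0

/-- `θ` is an inner function: `θ ∈ H∞` and `|θ| = 1` a.e. on the circle. -/
def IsInner (θ : Linf) : Prop :=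
  IsHardyInf θ ∧ ∀ᵐ x ∂μH, ‖(θ : AddCircle (2 * Real.pi) → ℂ) x‖ = 1

/-- `a ∈ 𝒢H∞` with explicit inverse `b ∈ H∞`. -/
def GHinfPair (a b : Linf) : Prop := IsHardyInf a ∧ IsHardyInf b ∧ a * b = 1

/-- `a ∈ 𝒢H∞`: `a` is invertible in the algebra `H∞`. -/
def IsGHinf (a : Linf) : Prop := ∃ b, GHinfPair a b

/-- `b ∈ 𝒢H̄∞`: `b` is the conjugate of an element of `𝒢H∞`. -/
def IsGHinfBar (b : Linf) : Prop := ∃ c, IsGHinf c ∧ b = star c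

/-- `a ∈ 𝒢L∞` with explicit inverse `b`. -/
def GLinfPair (a b : Linf) : Prop := a * b = 1 ∧ b * a = 1

/-- `a ∈ 𝒢L∞`: `a` is invertible in the algebra `L∞`. -/
def IsGLinf (a : Linf) : Prop := ∃ b, GLinfPair a b

/-- The kernel of an operator between subspaces of `L²`, viewed as a subspace of `L²`. -/
def subKer {K₁ K₂ : Submodule ℂ L2} (T : K₁ →L[ℂ] K₂) : Submodule ℂ L2 :=
  (LinearMap.ker (T : K₁ →ₗ[ℂ] K₂)).map K₁.subtype

/-- The range of an operator between subspaces of `L²`, viewed as a subspace of `L²`. -/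
def subRan {K₁ K₂ : Submodule ℂ L2} (T : K₁ →L[ℂ] K₂) : Submodule ℂ L2 :=
  (LinearMap.range (T : K₁ →ₗ[ℂ] K₂)).map K₂.subtype

/-- The image of a subspace `S ⊆ K₁` under `T : K₁ → K₂`, viewed as a subspace of `L²`. -/
def opImage {K₁ K₂ : Submodule ℂ L2} (T : K₁ →L[ℂ] K₂) (S : Submodule ℂ K₁) :
    Submodule ℂ L2 :=
  (S.map (T : K₁ →ₗ[ℂ] K₂)).map K₂.subtype

section Antilinear

variable {E : Type*} [NormedAddCommGroup E] [InnerProductSpace ℂ E]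

/-- `C` is antilinear: `C(f + a g) = C f + ā C g`. -/
def IsAntilinearMap (C : E → E) : Prop :=
  ∀ (f g : E) (a : ℂ), C (f + a • g) = C f + (starRingEnd ℂ a) • C g

/-- `Cs` is the antilinear adjoint of `C`: `⟨C f, g⟩ = conj ⟨f, Cs g⟩`. -/
def IsAntilinearAdjointOf (C Cs : E → E) : Prop :=
  ∀ f g : E, (inner ℂ (C f) g : ℂ) = (starRingEnd ℂ) (inner ℂ f (Cs g) : ℂ)

/-- `C` is an antilinear unitary: it is antilinear and its antilinear adjoint is its inverse. -/
def IsAntilinearUnitary (C : E → E) : Prop :=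
  IsAntilinearMap C ∧ ∃ Cs : E → E, IsAntilinearAdjointOf C Cs ∧
    Function.LeftInverse Cs C ∧ Function.RightInverse Cs C

/-- `T` is complex selfadjoint with respect to `C` (with inverse `Cinv`): `C T C⁻¹ = T*`. -/
def IsComplexSelfadjointWith [CompleteSpace E] (T : E →L[ℂ] E) (C Cinv : E → E) : Prop :=
  ∀ f : E, C (T (Cinv f)) = ContinuousLinearMap.adjoint T f

end Antilinear

/-! Since `b·H = b·a·K = K`, multiplication by `a` and by `b` maps `K` and `H` into each other,
so on these spaces the compressions `T_a`, `T_b` are plain multiplication operators and compose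
like their symbols. The statements about `T_{ā}`, `T_{b̄}` follow by taking adjoints, since
`(T_φ^{H₁,H₂})* = T_{φ̄}^{H₂,H₁}`. -/

lemma Linf.coeFn_mul (φ ψ : Linf) : ⇑(φ * ψ) =ᵐ[μH] ⇑φ • ⇑ψ := MemLp.coeFn_toLp _

lemma Linf.coeFn_one : ⇑(1 : Linf) =ᵐ[μH] fun _ => (1 : ℂ) := MemLp.coeFn_toLp _

lemma Linf.coeFn_star (φ : Linf) : ⇑(star φ) =ᵐ[μH] (starRingEnd ℂ) ∘ ⇑φ :=
  MemLp.coeFn_toLp _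

lemma coeFn_mulCLM (φ : Linf) (f : L2) : ⇑(mulCLM φ f) =ᵐ[μH] ⇑φ • ⇑f := mulFun_coe φ f

lemma mulCLM_comp_mulCLM (φ ψ : Linf) : (mulCLM φ).comp (mulCLM ψ) = mulCLM (φ * ψ) := by
  ext1 f
  apply Lp.ext
  filter_upwards [coeFn_mulCLM φ (mulCLM ψ f), coeFn_mulCLM ψ f, coeFn_mulCLM (φ * ψ) f,
    Linf.coeFn_mul φ ψ] with x h₁ h₂ h₃ h₄
  simp only [ContinuousLinearMap.comp_apply, Pi.smul_apply', smul_eq_mul] at *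
  rw [h₁, h₂, h₃, h₄, mul_assoc]

lemma mulCLM_one : mulCLM 1 = ContinuousLinearMap.id ℂ L2 := by
  ext1 f
  apply Lp.ext
  filter_upwards [coeFn_mulCLM 1 f, Linf.coeFn_one] with x h₁ h₂
  simp only [ContinuousLinearMap.id_apply, Pi.smul_apply', smul_eq_mul] at *
  rw [h₁, h₂, one_mul]

lemma adjoint_mulCLM (φ : Linf) :
    ContinuousLinearMap.adjoint (mulCLM φ) = mulCLM (star φ) := by
  symm
  rw [ContinuousLinearMap.eq_adjoint_iff]
  intro f g
  rw [L2.inner_def, L2.inner_def]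
  refine integral_congr_ae ?_
  filter_upwards [coeFn_mulCLM (star φ) f, Linf.coeFn_star φ, coeFn_mulCLM φ g] with x h₁ h₂ h₃
  simp only [h₁, h₂, h₃, Pi.smul_apply', smul_eq_mul, Function.comp_apply,
    RCLike.inner_apply, map_mul, starRingEnd_self_apply]
  ring

lemma smulSub_smulSub (φ ψ : Linf) (K : Submodule ℂ L2) :
    smulSub φ (smulSub ψ K) = smulSub (φ * ψ) K := by
  rw [smulSub, smulSub, smulSub, ← Submodule.map_comp, ← mulCLM_comp_mulCLM]
  rfl

lemma smulSub_one (K : Submodule ℂ L2) : smulSub 1 K = K := by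
  rw [smulSub, mulCLM_one]
  exact Submodule.map_id K

lemma adjoint_genToeplitz (φ : Linf) (H₁ H₂ : Submodule ℂ L2)
    [CompleteSpace H₁] [CompleteSpace H₂] :
    ContinuousLinearMap.adjoint (genToeplitz φ H₁ H₂) = genToeplitz (star φ) H₂ H₁ := by
  rw [genToeplitz, genToeplitz, ContinuousLinearMap.adjoint_comp,
    ContinuousLinearMap.adjoint_comp, Submodule.adjoint_subtypeL,
    Submodule.adjoint_orthogonalProjectionOnto, adjoint_mulCLM,
    ContinuousLinearMap.comp_assoc]

section SmulSubLE

variable {φ ψ : Linf} {H₁ H₂ H₃ : Submodule ℂ L2} [CompleteSpace H₂] [CompleteSpace H₃]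

lemma coe_genToeplitz_of_smulSub_le (h : smulSub φ H₁ ≤ H₂) (f : H₁) :
    (genToeplitz φ H₁ H₂ f : L2) = mulCLM φ f := by
  have hf : mulCLM φ f ∈ H₂ := h (Submodule.mem_map_of_mem f.2)
  simp only [genToeplitz, ContinuousLinearMap.comp_apply, Submodule.subtypeL_apply]
  exact congrArg Subtype.val (Submodule.orthogonalProjectionOnto_mem_subspace_eq_self ⟨_, hf⟩)

lemma genToeplitz_comp_genToeplitz (hψ : smulSub ψ H₁ ≤ H₂) (hφ : smulSub φ H₂ ≤ H₃) :
    (genToeplitz φ H₂ H₃).comp (genToeplitz ψ H₁ H₂) = genToeplitz (φ * ψ) H₁ H₃ := by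
  have hφψ : smulSub (φ * ψ) H₁ ≤ H₃ := by
    rw [← smulSub_smulSub]
    exact (Submodule.map_mono hψ).trans hφ
  ext1 f
  apply Subtype.ext
  rw [ContinuousLinearMap.comp_apply, coe_genToeplitz_of_smulSub_le hφ,
    coe_genToeplitz_of_smulSub_le hψ, coe_genToeplitz_of_smulSub_le hφψ,
    ← mulCLM_comp_mulCLM, ContinuousLinearMap.comp_apply]

end SmulSubLE

lemma genToeplitz_one (H : Submodule ℂ L2) [CompleteSpace H] :
    genToeplitz 1 H H = ContinuousLinearMap.id ℂ H := by
  ext1 f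
  apply Subtype.ext
  rw [coe_genToeplitz_of_smulSub_le (smulSub_one H).le, mulCLM_one]
  rfl

/-- Proposition 2.10: for `a ∈ 𝒢L∞` (with inverse `b = a⁻¹`) and
`aK = H`, the operators `T_a^{K,H} = M_a|_K` and `T_{ā⁻¹}^{K,H}` are invertible with
inverses `T_{a⁻¹}^{H,K}` and `T_{ā}^{H,K}` respectively, and
`T_{ā⁻¹}^{K,H} = ((T_a^{K,H})*)⁻¹`. -/
theorem statement4 (H K : Submodule ℂ L2) [CompleteSpace H] [CompleteSpace K]
    (a b : Linf) (hab : GLinfPair a b) (haK : smulSub a K = H) :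
    (∀ f : K, (genToeplitz a K H f : L2) = mulCLM a (f : L2)) ∧
    (genToeplitz a K H).comp (genToeplitz b H K) = ContinuousLinearMap.id ℂ H ∧
    (genToeplitz b H K).comp (genToeplitz a K H) = ContinuousLinearMap.id ℂ K ∧
    (genToeplitz (star b) K H).comp (genToeplitz (star a) H K) =
      ContinuousLinearMap.id ℂ H ∧
    (genToeplitz (star a) H K).comp (genToeplitz (star b) K H) =
      ContinuousLinearMap.id ℂ K ∧
    (genToeplitz (star b) K H).comp (ContinuousLinearMap.adjoint (genToeplitz a K H)) =
      ContinuousLinearMap.id ℂ H ∧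
    (ContinuousLinearMap.adjoint (genToeplitz a K H)).comp (genToeplitz (star b) K H) =
      ContinuousLinearMap.id ℂ K := by
  obtain ⟨hab, hba⟩ := hab
  have hbH : smulSub b H = K := by rw [← haK, smulSub_smulSub, hba, smulSub_one]
  have hTaTb : (genToeplitz a K H).comp (genToeplitz b H K) = ContinuousLinearMap.id ℂ H := by
    rw [genToeplitz_comp_genToeplitz hbH.le haK.le, hab, genToeplitz_one]
  have hTbTa : (genToeplitz b H K).comp (genToeplitz a K H) = ContinuousLinearMap.id ℂ K := by
    rw [genToeplitz_comp_genToeplitz haK.le hbH.le, hba, genToeplitz_one]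
  have hstar := congrArg ContinuousLinearMap.adjoint hTaTb
  have hstar' := congrArg ContinuousLinearMap.adjoint hTbTa
  simp only [ContinuousLinearMap.adjoint_comp, adjoint_genToeplitz,
    ContinuousLinearMap.adjoint_id] at hstar hstar'
  rw [adjoint_genToeplitz]
  exact ⟨coe_genToeplitz_of_smulSub_le haK.le, hTaTb, hTbTa, hstar, hstar', hstar, hstar'⟩
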